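/- If there exists y ∈ ℝ^n with -y ≤ Aᵀ y ≤ y componentwise and bᵀ y > 0, then the absolute value equation Ax - |x| = b has no solution. -/

import Mathlib

open Matrix

/-- Componentwise absolute value of a vector. -/
noncomputable def absv {n : ℕ} (x : Fin n → ℝ) : Fin n → ℝ := fun i => |x i|

/-- Euclidean norm of a vector. -/
noncomputable def enorm2 {n : ℕ} (x : Fin n → ℝ) : ℝ := Real.sqrt (∑ i, x i ^ 2)

/-- Largest singular value (spectral / operator 2-norm). -/
noncomputable def sigmaMax {n : ℕ} (A : Matrix (Fin n) (Fin n) ℝ) : ℝ :=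
  sSup {r | ∃ x : Fin n → ℝ, enorm2 x = 1 ∧ r = enorm2 (A.mulVec x)}

/-- Smallest singular value. -/
noncomputable def sigmaMin {n : ℕ} (A : Matrix (Fin n) (Fin n) ℝ) : ℝ :=
  sInf {r | ∃ x : Fin n → ℝ, enorm2 x = 1 ∧ r = enorm2 (A.mulVec x)}

/-- Spectral radius of a real matrix (via its complex spectrum). -/
noncomputable def specRad {n : ℕ} (A : Matrix (Fin n) (Fin n) ℝ) : ENNReal :=
  spectralRadius ℂ (A.map (Complex.ofReal ·))

theorem stmt4 {n : ℕ} (A : Matrix (Fin n) (Fin n) ℝ) (b : Fin n → ℝ)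
    (y : Fin n → ℝ) (h1 : ∀ i, -(y i) ≤ Aᵀ.mulVec y i) (h2 : ∀ i, Aᵀ.mulVec y i ≤ y i)
    (h3 : 0 < b ⬝ᵥ y) :
    ¬ ∃ x : Fin n → ℝ, A.mulVec x - absv x = b := by
  rintro ⟨x, hx⟩
  have key : A.mulVec x ⬝ᵥ y = x ⬝ᵥ Aᵀ.mulVec y := by
    rw [Matrix.dotProduct_mulVec, Matrix.vecMul_transpose]
  have hby : b ⬝ᵥ y = x ⬝ᵥ Aᵀ.mulVec y - absv x ⬝ᵥ y := by
    rw [← hx, sub_dotProduct, key]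
  have hle : x ⬝ᵥ Aᵀ.mulVec y ≤ absv x ⬝ᵥ y := by
    apply Finset.sum_le_sum
    intro i _
    have hy : 0 ≤ y i := by linarith [h1 i, h2 i]
    have : |x i * Aᵀ.mulVec y i| ≤ |x i| * y i := by
      rw [abs_mul]
      exact mul_le_mul_of_nonneg_left (abs_le.mpr ⟨h1 i, h2 i⟩) (abs_nonneg _)
    calc x i * Aᵀ.mulVec y i ≤ |x i * Aᵀ.mulVec y i| := le_abs_self _
      _ ≤ |x i| * y i := this
  rw [hby] at h3
  linarith [hle]
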